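/- Suppose a discrete group G acts on a row-finite, finitely aligned multitree E with no sources, with all vertex stabilisers infinite cyclic. Fix an infinite path λ = e_1e_2⋯ in Γ = G\E and a lift λ′ in E. Then the stabiliser G_{λ′} is trivial if and only if limsup_{k→∞} ⟨q(λ_{k−1})/ω_{e_k}⟩ = ∞. -/
import Mathlib


/-- A directed graph: vertices, edges, and range/source maps. -/
structure DirGraph where
  V : Type
  E : Type
  r : E → V
  s : E → V

namespace DirGraph

/-- `G.IsDPath v w p` : `p` is a directed path from `w` to `v`, i.e. a (possibly empty)
composable sequence of edges with range `v` and source `w`. -/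
def IsDPath (G : DirGraph) : G.V → G.V → List G.E → Prop
  | v, w, [] => v = w
  | v, w, e :: p => G.r e = v ∧ G.IsDPath (G.s e) w p

/-- The relation `v ≤ w` : there is a directed path from `w` to `v`. -/
def Le (G : DirGraph) (v w : G.V) : Prop := ∃ p, G.IsDPath v w p

/-- A multitree: there is at most one directed path between any two vertices. -/
def IsMultitree (G : DirGraph) : Prop :=
  ∀ v w p q, G.IsDPath v w p → G.IsDPath v w q → p = q

/-- Row-finite: every vertex receives finitely many edges. -/
def RowFinite (G : DirGraph) : Prop := ∀ v, {e : G.E | G.r e = v}.Finite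

/-- No sources: every vertex receives at least one edge. -/
def NoSources (G : DirGraph) : Prop := ∀ v, ∃ e, G.r e = v

/-- The set of minimal common upper bounds of `v` and `w`. -/
def mub (G : DirGraph) (v w : G.V) : Set G.V :=
  {u | G.Le v u ∧ G.Le w u ∧ ∀ u', G.Le v u' → G.Le w u' → G.Le u' u → u' = u}

/-- Finitely aligned: any two vertices have finitely many minimal common upper bounds. -/
def FinAligned (G : DirGraph) : Prop := ∀ v w, (G.mub v w).Finite

/-- Infinite (directed) paths in `G`. -/
def InfPath (G : DirGraph) := {l : ℕ → G.E // ∀ n, G.s (l n) = G.r (l (n + 1))}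

/-- Shift-tail equivalence of infinite paths. -/
def stEquiv (G : DirGraph) (a b : G.InfPath) : Prop :=
  ∃ m n : ℕ, ∀ k, a.1 (m + k) = b.1 (n + k)

/-- The boundary `∂G`: shift-tail equivalence classes of infinite paths. -/
def Bdry (G : DirGraph) := Quot G.stEquiv

/-- The cylinder set `Z_∂(v) ⊆ ∂G` of boundary classes of infinite paths with range `v`. -/
def Zb (G : DirGraph) (v : G.V) : Set G.Bdry :=
  {x | ∃ l : G.InfPath, G.r (l.1 0) = v ∧ Quot.mk G.stEquiv l = x}

/-- The cylinder-set topology on the boundary `∂G`. -/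
def bdryTop (G : DirGraph) : TopologicalSpace G.Bdry :=
  TopologicalSpace.generateFrom {S | ∃ v, S = G.Zb v}

/-- The cylinder set `Z(v) ⊆ Ω = G.V ⊕ ∂G`: vertices `w` with a path from `w` to `v`,
together with boundary classes of infinite paths through `v`. -/
def Zfull (G : DirGraph) (v : G.V) : Set (G.V ⊕ G.Bdry) :=
  {x | Sum.elim (fun w => G.Le v w) (fun b => b ∈ G.Zb v) x}

end DirGraph

namespace DirGraph

variable {Γgrp : Type} [Group Γgrp]

/-- The quotient directed graph `G\E` of a graph action: vertices and edges are the
orbits of vertices and edges. -/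
def quotGraph (Γgrp : Type) [Group Γgrp] (E : DirGraph)
    [MulAction Γgrp E.V] [MulAction Γgrp E.E]
    (hr : ∀ (g : Γgrp) (e : E.E), E.r (g • e) = g • E.r e)
    (hs : ∀ (g : Γgrp) (e : E.E), E.s (g • e) = g • E.s e) : DirGraph where
  V := Quotient (MulAction.orbitRel Γgrp E.V)
  E := Quotient (MulAction.orbitRel Γgrp E.E)
  r := Quotient.map E.r (by
    intro a b hab
    obtain ⟨g, hg⟩ := hab
    exact ⟨g, by simp only [← hr, hg]⟩)
  s := Quotient.map E.s (by
    intro a b hab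
    obtain ⟨g, hg⟩ := hab
    exact ⟨g, by simp only [← hs, hg]⟩)

/-- The induced action of a group element on infinite paths. -/
def actInf (E : DirGraph) [MulAction Γgrp E.V] [MulAction Γgrp E.E]
    (hr : ∀ (g : Γgrp) (e : E.E), E.r (g • e) = g • E.r e)
    (hs : ∀ (g : Γgrp) (e : E.E), E.s (g • e) = g • E.s e)
    (g : Γgrp) (l : E.InfPath) : E.InfPath :=
  ⟨fun n => g • l.1 n, fun n => by rw [hs, hr, l.2 n]⟩

/-- The induced action of a group element on the boundary `∂E`. -/
def actBdry (E : DirGraph) [MulAction Γgrp E.V] [MulAction Γgrp E.E]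
    (hr : ∀ (g : Γgrp) (e : E.E), E.r (g • e) = g • E.r e)
    (hs : ∀ (g : Γgrp) (e : E.E), E.s (g • e) = g • E.s e)
    (g : Γgrp) : E.Bdry → E.Bdry :=
  Quot.map (E.actInf hr hs g) (by
    rintro a b ⟨m, n, h⟩
    exact ⟨m, n, fun k => by simp only [actInf, h k]⟩)

end DirGraph

/-- The signed index ratio `q(α) = ∏ ω_{ē_i}/ω_{e_i}` of a finite path. -/
def qratio {E : DirGraph} (ω ωb : E.E → ℤ) (p : List E.E) : ℚ :=
  (p.map fun e => (ωb e : ℚ) / (ω e : ℚ)).prod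


lemma den_mul_self_eq_num (q : ℚ) : (q.den : ℚ) * q = (q.num : ℚ) := by
  have h0 : (q.den : ℚ) ≠ 0 := Nat.cast_ne_zero.mpr q.den_nz
  have h := Rat.num_div_den q
  rw [div_eq_iff h0] at h
  linarith [h]

lemma int_of_den_dvd {m : ℤ} {q : ℚ} (h : (q.den : ℤ) ∣ m) : ∃ n : ℤ, (m : ℚ) * q = n := by
  obtain ⟨t, rfl⟩ := h
  refine ⟨t * q.num, ?_⟩
  push_cast
  linear_combination (t : ℚ) * den_mul_self_eq_num q

lemma den_dvd_of_int {m n : ℤ} {q : ℚ} (h : (m : ℚ) * q = n) : (q.den : ℤ) ∣ m := by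
  have hden := den_mul_self_eq_num q
  have h1 : (m : ℚ) * q.num = n * q.den := by
    linear_combination (q.den : ℚ) * h - (m : ℚ) * hden
  have h2 : m * q.num = n * q.den := by exact_mod_cast h1
  have h3 : (q.den : ℤ) ∣ m * q.num := h2 ▸ ⟨n, mul_comm n (q.den : ℤ)⟩
  have h4 : q.den ∣ m.natAbs * q.num.natAbs := by
    rw [← Int.natAbs_mul]
    simpa using Int.natAbs_dvd_natAbs.mpr h3
  have h5 : q.den ∣ m.natAbs := (Nat.Coprime.dvd_of_dvd_mul_right q.reduced.symm) h4
  exact Int.dvd_natAbs.mp (Int.natCast_dvd_natCast.mpr h5)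

open DirGraph in
/-- With all vertex stabilisers infinite cyclic, the stabiliser of an infinite path `λ'`
is trivial iff `limsup_k ⟨q(λ_{k-1})/ω_{e_k}⟩ = ∞`, i.e. the sequence of least positive
denominators is unbounded. -/
theorem stmt18 (Γgrp : Type) [Group Γgrp] [Countable Γgrp]
    (E : DirGraph) [Countable E.V] [Countable E.E]
    [MulAction Γgrp E.V] [MulAction Γgrp E.E]
    (hr : ∀ (g : Γgrp) (e : E.E), E.r (g • e) = g • E.r e)
    (hs : ∀ (g : Γgrp) (e : E.E), E.s (g • e) = g • E.s e)
    (hmt : E.IsMultitree) (hrow : E.RowFinite) (hnsrc : E.NoSources)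
    (hfa : E.FinAligned)
    (gen : E.V → Γgrp)
    (hgen : ∀ v, Subgroup.zpowers (gen v) = MulAction.stabilizer Γgrp v)
    (hgeninf : ∀ v, ¬ IsOfFinOrder (gen v))
    (genE : E.E → Γgrp)
    (hgenE : ∀ e, Subgroup.zpowers (genE e) = MulAction.stabilizer Γgrp e)
    (ω ωb : E.E → ℤ)
    (hω : ∀ e, genE e = gen (E.r e) ^ (ω e))
    (hωb : ∀ e, genE e = gen (E.s e) ^ (ωb e))
    (l : E.InfPath) :
    (∀ g : Γgrp, (∀ n, g • l.1 n = l.1 n) → g = 1) ↔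
      ∀ N : ℕ, ∃ k : ℕ, N ≤
        (qratio ω ωb (List.ofFn fun i : Fin k => l.1 i) / (ω (l.1 k) : ℚ)).den := by
  classical
  have hinj : ∀ u : E.V, Function.Injective fun n : ℤ => gen u ^ n :=
    fun u => injective_zpow_iff_not_isOfFinOrder.mpr (hgeninf u)
  -- ω e ≠ 0 for every edge, by row-finiteness
  have hωne : ∀ e : E.E, ω e ≠ 0 := by
    intro e he0
    have hfin : Finite {e' : E.E // E.r e' = E.r e} := (hrow (E.r e)).to_subtype
    have hmem : ∀ n : ℤ, E.r (gen (E.r e) ^ n • e) = E.r e := by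
      intro n
      rw [hr]
      exact MulAction.mem_stabilizer_iff.mp
        ((hgen (E.r e)) ▸ Subgroup.zpow_mem_zpowers (gen (E.r e)) n)
    obtain ⟨a, b, hab, heq⟩ := Finite.exists_ne_map_eq_of_infinite
      (fun n : ℤ => (⟨gen (E.r e) ^ n • e, hmem n⟩ : {e' : E.E // E.r e' = E.r e}))
    have heq' : gen (E.r e) ^ a • e = gen (E.r e) ^ b • e := congrArg Subtype.val heq
    have hfix : gen (E.r e) ^ (-b + a) • e = e := by
      rw [zpow_add, mul_smul, zpow_neg, heq', inv_smul_smul]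
    have hst : gen (E.r e) ^ (-b + a) ∈ MulAction.stabilizer Γgrp e :=
      MulAction.mem_stabilizer_iff.mpr hfix
    rw [← hgenE] at hst
    obtain ⟨t, ht⟩ := Subgroup.mem_zpowers_iff.mp hst
    rw [hω e, he0, zpow_zero, one_zpow] at ht
    have : (0 : ℤ) = -b + a := hinj (E.r e) (by simpa using ht)
    omega
  have hωbne : ∀ e : E.E, ωb e ≠ 0 := by
    intro e he0
    have h1 : genE e = 1 := by rw [hωb e, he0, zpow_zero]
    have h2 : genE e = gen (E.r e) ^ (ω e) := hω e
    have : ω e = (0 : ℤ) := hinj (E.r e) (by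
      show gen (E.r e) ^ (ω e) = gen (E.r e) ^ (0 : ℤ)
      rw [← h2, h1, zpow_zero])
    exact hωne e this
  have hωQ : ∀ e : E.E, ((ω e : ℤ) : ℚ) ≠ 0 := fun e => Int.cast_ne_zero.mpr (hωne e)
  set Q : ℕ → ℚ := fun k => qratio ω ωb (List.ofFn fun i : Fin k => l.1 i) with hQdef
  set d : ℕ → ℕ := fun k => (Q k / (ω (l.1 k) : ℚ)).den with hddef
  have hQ0 : Q 0 = 1 := by simp [hQdef, qratio]
  have hQsucc : ∀ k, Q (k + 1) = Q k * ((ωb (l.1 k) : ℚ) / (ω (l.1 k) : ℚ)) := by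
    intro k
    rw [hQdef]
    simp only [List.ofFn_succ']
    simp [qratio]
  -- key induction
  have key : ∀ (m : ℤ) (k : ℕ),
      ((∀ j < k, gen (E.r (l.1 0)) ^ m • l.1 j = l.1 j) ↔ (∀ j < k, (d j : ℤ) ∣ m))
      ∧ ((∀ j < k, (d j : ℤ) ∣ m) →
          ∃ n : ℤ, (m : ℚ) * Q k = (n : ℚ) ∧ gen (E.r (l.1 0)) ^ m = gen (E.r (l.1 k)) ^ n) := by
    intro m k
    induction k with
    | zero =>
      refine ⟨by simp, fun _ => ⟨m, by rw [hQ0, mul_one], rfl⟩⟩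
    | succ k ih =>
      obtain ⟨ih1, ih2⟩ := ih
      have hω0 := hωQ (l.1 k)
      have step : (∀ j < k, (d j : ℤ) ∣ m) → (d k : ℤ) ∣ m →
          ∃ p : ℤ, (m : ℚ) * (Q k / (ω (l.1 k) : ℚ)) = p ∧
            gen (E.r (l.1 0)) ^ m = genE (l.1 k) ^ p := by
        intro h1 h2
        obtain ⟨n, hn, hg⟩ := ih2 h1
        obtain ⟨p, hp⟩ := int_of_den_dvd (q := Q k / (ω (l.1 k) : ℚ)) h2
        have hp' : (m : ℚ) * Q k = p * (ω (l.1 k) : ℚ) := by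
          rw [← mul_div_assoc, div_eq_iff hω0] at hp
          exact hp
        have hnp : n = ω (l.1 k) * p := by
          have hc : (n : ℚ) = ((ω (l.1 k) * p : ℤ) : ℚ) := by
            push_cast
            rw [← hn, hp']
            ring
          exact_mod_cast hc
        refine ⟨p, hp, ?_⟩
        rw [hg, hnp, hω (l.1 k), ← zpow_mul]
      constructor
      · constructor
        · intro hfix
          have hdk : ∀ j < k, (d j : ℤ) ∣ m :=
            ih1.mp (fun j hj => hfix j (hj.trans k.lt_succ_self))
          have hdkk : (d k : ℤ) ∣ m := by
            obtain ⟨n, hn, hg⟩ := ih2 hdk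
            have hst : gen (E.r (l.1 0)) ^ m ∈ MulAction.stabilizer Γgrp (l.1 k) :=
              MulAction.mem_stabilizer_iff.mpr (hfix k k.lt_succ_self)
            rw [← hgenE] at hst
            obtain ⟨p, hp⟩ := Subgroup.mem_zpowers_iff.mp hst
            rw [hg, hω (l.1 k), ← zpow_mul] at hp
            have hn' : ω (l.1 k) * p = n := hinj (E.r (l.1 k)) hp
            have hpq : (m : ℚ) * (Q k / (ω (l.1 k) : ℚ)) = p := by
              rw [← mul_div_assoc, hn, ← hn']
              push_cast
              first
              | (field_simp; ring)
              | field_simp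
            exact den_dvd_of_int hpq
          intro j hj
          rcases Nat.lt_succ_iff_lt_or_eq.mp hj with h | h
          · exact hdk j h
          · exact h ▸ hdkk
        · intro hdvd j hj
          have hdk : ∀ j < k, (d j : ℤ) ∣ m := fun j hj => hdvd j (hj.trans k.lt_succ_self)
          rcases Nat.lt_succ_iff_lt_or_eq.mp hj with h | h
          · exact (ih1.mpr hdk) j h
          · obtain ⟨p, hpdiv, hgp⟩ := step hdk (hdvd k k.lt_succ_self)
            have hst : gen (E.r (l.1 0)) ^ m ∈ MulAction.stabilizer Γgrp (l.1 k) := by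
              rw [← hgenE, hgp]
              exact Subgroup.zpow_mem_zpowers _ p
            exact h ▸ MulAction.mem_stabilizer_iff.mp hst
      · intro hdvd
        have hdk : ∀ j < k, (d j : ℤ) ∣ m := fun j hj => hdvd j (hj.trans k.lt_succ_self)
        obtain ⟨p, hpdiv, hgp⟩ := step hdk (hdvd k k.lt_succ_self)
        refine ⟨ωb (l.1 k) * p, ?_, ?_⟩
        · rw [hQsucc k]
          push_cast
          calc (m : ℚ) * (Q k * ((ωb (l.1 k) : ℚ) / (ω (l.1 k) : ℚ)))
              = ((m : ℚ) * (Q k / (ω (l.1 k) : ℚ))) * (ωb (l.1 k) : ℚ) := by ring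
            _ = (ωb (l.1 k) : ℚ) * (p : ℚ) := by rw [hpdiv]; ring
        · rw [hgp, hωb (l.1 k), ← zpow_mul, l.2 k]
  have keyB : ∀ m : ℤ, (∀ n, gen (E.r (l.1 0)) ^ m • l.1 n = l.1 n) ↔ (∀ k, (d k : ℤ) ∣ m) := by
    intro m
    constructor
    · intro h k
      exact ((key m (k + 1)).1.mp (fun j _ => h j)) k k.lt_succ_self
    · intro h n
      exact ((key m (n + 1)).1.mpr (fun j _ => h j)) n n.lt_succ_self
  constructor
  · intro htriv N
    by_contra hN
    push_neg at hN
    have hdvd : ∀ k, (d k : ℤ) ∣ (N.factorial : ℤ) := by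
      intro k
      exact_mod_cast Int.natCast_dvd_natCast.mpr
        (Nat.dvd_factorial (Q k / (ω (l.1 k) : ℚ)).pos (le_of_lt (hN k)))
    have hfix := (keyB (N.factorial : ℤ)).mpr hdvd
    have h1 := htriv _ hfix
    have h2 : ((N.factorial : ℤ)) = 0 := hinj (E.r (l.1 0)) (by simpa using h1)
    exact absurd (by exact_mod_cast h2) N.factorial_ne_zero
  · intro hub g hfixg
    have hv0 : g • E.r (l.1 0) = E.r (l.1 0) := by
      rw [← hr g (l.1 0), hfixg 0]
    have hstv : g ∈ MulAction.stabilizer Γgrp (E.r (l.1 0)) :=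
      MulAction.mem_stabilizer_iff.mpr hv0
    rw [← hgen] at hstv
    obtain ⟨m, hm⟩ := Subgroup.mem_zpowers_iff.mp hstv
    have hdvd : ∀ k, (d k : ℤ) ∣ m := (keyB m).mp (by intro n; rw [hm]; exact hfixg n)
    have hm0 : m = 0 := by
      by_contra hm0
      obtain ⟨k, hk⟩ := hub (m.natAbs + 1)
      have h1 : (d k : ℤ) ≤ |m| := Int.le_of_dvd (abs_pos.mpr hm0) ((dvd_abs _ _).mpr (hdvd k))
      have h2 : d k ≤ m.natAbs := by
        rw [Int.abs_eq_natAbs] at h1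
        exact_mod_cast h1
      have hk' : m.natAbs + 1 ≤ d k := hk
      omega
    rw [← hm, hm0, zpow_zero]
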